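/- Theorem 2, equation (appro) — quadratic-order equivariance error of the discretized first layer: Let S be a finite subgroup of O(2), let d ≥ 0, fix coefficients β defining the transformed operators χ^{(A)}, and let M, C, h₀ > 0. Let P ⊂ ℤ² be a finite set and, for each A ∈ S and each h ∈ (0, h₀], let c^A_p(h) ∈ ℝ (p ∈ P) be stencil coefficients satisfying the consistency hypothesis: for every function g : ℝ² → ℝ that is (d+2) times continuously differentiable with ‖D^j g(z)‖ ≤ M for all z ∈ ℝ² and all j ≤ d+2, every A ∈ S, every x ∈ ℝ² and every h ∈ (0, h₀], |Σ_{p∈P} c^A_p(h)·g(x + h·p) − χ^{(A)}[g](x)| ≤ C·h². Then for every r : ℝ² → ℝ that is (d+2) times continuously differentiable with ‖D^j r(z)‖ ≤ M for all z and all j ≤ d+2, every Ã, A ∈ S, every x ∈ ℝ² and every h ∈ (0, h₀], |Σ_{p∈P} c^A_p(h)·r(Ã⁻¹(x + h·p)) − χ^{(Ã⁻¹A)}[r](Ã⁻¹x)| ≤ C·h². That is, applying the discretized operator to the transformed input π_Ã[r] agrees with the transformed continuous feature map π^E_Ã[Ψ[r]] evaluated at (x, A) up to an error of order h². -/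

import Mathlib

/-- Action of an `n × n` real matrix on `ℝⁿ` (with the Euclidean norm) by
matrix-vector multiplication. -/
noncomputable def mact {n : ℕ} (A : Matrix (Fin n) (Fin n) ℝ) :
    EuclideanSpace ℝ (Fin n) →ₗ[ℝ] EuclideanSpace ℝ (Fin n) :=
  Matrix.toEuclideanLin A

/-- The list of direction vectors `A e₁` repeated `m 1` times, ..., `A eₙ` repeated
`m n` times, as a function on `Fin (∑ i, m i)` (block `i` consists of copies of `A eᵢ`). -/
noncomputable def dirs {n : ℕ} (A : Matrix (Fin n) (Fin n) ℝ) (m : Fin n → ℕ)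
    (j : Fin (∑ i, m i)) : EuclideanSpace ℝ (Fin n) :=
  (((List.finRange n).flatMap fun i =>
      List.replicate (m i) (mact A (EuclideanSpace.single i 1)))).getD j 0

/-- The transformed differential operator
`χ^{(A)}[r](x) = ∑_{|m| ≤ d} β_m · D^{|m|} r(x)[A e₁ repeated m₁ times, …, A eₙ repeated mₙ times]`,
where multi-indices `m ∈ ℕⁿ` with `|m| ≤ d` (hence each entry `≤ d`) are encoded as
functions `Fin n → Fin (d+1)`. -/
noncomputable def chi {n d : ℕ} (β : (Fin n → Fin (d+1)) → ℝ)
    (A : Matrix (Fin n) (Fin n) ℝ)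
    (r : EuclideanSpace ℝ (Fin n) → ℝ) (x : EuclideanSpace ℝ (Fin n)) : ℝ :=
  ∑ m : Fin n → Fin (d+1),
    if (∑ i, (m i : ℕ)) ≤ d then
      β m * iteratedFDeriv ℝ (∑ i, (m i : ℕ)) r x (dirs A fun i => (m i : ℕ))
    else 0

/-- The matrix underlying an element of a subgroup `S ≤ O(2)`. -/
noncomputable def matS {S : Subgroup ↥(Matrix.orthogonalGroup (Fin 2) ℝ)}
    (A : S) : Matrix (Fin 2) (Fin 2) ℝ :=
  ((A : ↥(Matrix.orthogonalGroup (Fin 2) ℝ)) : Matrix (Fin 2) (Fin 2) ℝ)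

/-- The grid point `p ∈ ℤ²` as a point of the Euclidean plane. -/
noncomputable def gridpt (p : ℤ × ℤ) : EuclideanSpace ℝ (Fin 2) :=
  WithLp.toLp 2 ![(p.1 : ℝ), (p.2 : ℝ)]

/-!
The transformed input `π_Ã[r] = r ∘ Ã⁻¹` is again an admissible test function: `Ã⁻¹` is a linear
isometry, so composing with it preserves smoothness and the norms of all iterated derivatives.
Hence the consistency hypothesis applies to it directly, and the chain rule
`Dᵏ(r ∘ U)(x)[v₁, …, vₖ] = Dᵏr(Ux)[Uv₁, …, Uvₖ]` turns `χ^{(A)}[r ∘ Ã⁻¹](x)` into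
`χ^{(Ã⁻¹A)}[r](Ã⁻¹x)`, because the directions `A eᵢ` become `Ã⁻¹A eᵢ`.
-/

open Matrix

lemma mact_mul {n : ℕ} (A B : Matrix (Fin n) (Fin n) ℝ) (v : EuclideanSpace ℝ (Fin n)) :
    mact (A * B) v = mact A (mact B v) := by
  simp [mact, toLpLin_apply, mulVec_mulVec]

lemma dirs_mul {n : ℕ} (A B : Matrix (Fin n) (Fin n) ℝ) (m : Fin n → ℕ) :
    dirs (A * B) m = mact A ∘ dirs B m := by
  funext j
  rw [Function.comp_apply, dirs, dirs, ← map_zero (mact A), ← List.getD_map _ _ (mact A)]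
  simp [List.map_flatMap, mact_mul]

lemma chi_comp_mact {n d : ℕ} (β : (Fin n → Fin (d+1)) → ℝ) (U B : Matrix (Fin n) (Fin n) ℝ)
    {r : EuclideanSpace ℝ (Fin n) → ℝ} (hr : ContDiff ℝ d r) (x : EuclideanSpace ℝ (Fin n)) :
    chi β B (r ∘ mact U) x = chi β (U * B) r (mact U x) := by
  let L := toEuclideanCLM (𝕜 := ℝ) U
  refine Finset.sum_congr rfl fun m _ => ?_
  split_ifs with hm
  · change β m * iteratedFDeriv ℝ _ (r ∘ L) x _ = _
    rw [L.iteratedFDeriv_comp_right hr x (by exact_mod_cast hm), dirs_mul]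
    rfl
  · rfl

lemma norm_iteratedFDeriv_comp_mact {n : ℕ} {F : Type*} [NormedAddCommGroup F] [NormedSpace ℝ F]
    (U : orthogonalGroup (Fin n) ℝ) (r : EuclideanSpace ℝ (Fin n) → F) (k : ℕ)
    (x : EuclideanSpace ℝ (Fin n)) :
    ‖iteratedFDeriv ℝ k (r ∘ mact (U : Matrix (Fin n) (Fin n) ℝ)) x‖ =
      ‖iteratedFDeriv ℝ k r (mact (U : Matrix (Fin n) (Fin n) ℝ) x)‖ :=
  (Unitary.linearIsometryEquiv ⟨toEuclideanCLM (𝕜 := ℝ) (U : Matrix (Fin n) (Fin n) ℝ),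
    Unitary.map_mem _ U.prop⟩).norm_iteratedFDeriv_comp_right r x k

theorem discretized_Psi_equivariance_error_general {d : ℕ}
    (S : Subgroup ↥(Matrix.orthogonalGroup (Fin 2) ℝ))
    (β : (Fin 2 → Fin (d+1)) → ℝ) (M C h₀ : ℝ)
    (P : Finset (ℤ × ℤ)) (c : S → ℤ × ℤ → ℝ → ℝ)
    (hcons : ∀ g : EuclideanSpace ℝ (Fin 2) → ℝ, ContDiff ℝ ((d + 2 : ℕ) : ℕ∞) g →
      (∀ z, ∀ j ≤ d + 2, ‖iteratedFDeriv ℝ j g z‖ ≤ M) →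
      ∀ A : S, ∀ x : EuclideanSpace ℝ (Fin 2), ∀ h : ℝ, 0 < h → h ≤ h₀ →
        |(∑ p ∈ P, c A p h * g (x + h • gridpt p)) - chi β (matS A) g x| ≤ C * h ^ 2) :
    ∀ r : EuclideanSpace ℝ (Fin 2) → ℝ, ContDiff ℝ ((d + 2 : ℕ) : ℕ∞) r →
      (∀ z, ∀ j ≤ d + 2, ‖iteratedFDeriv ℝ j r z‖ ≤ M) →
      ∀ Atil A : S, ∀ x : EuclideanSpace ℝ (Fin 2), ∀ h : ℝ, 0 < h → h ≤ h₀ →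
        |(∑ p ∈ P, c A p h * r (mact (matS Atil⁻¹) (x + h • gridpt p)))
            - chi β (matS (Atil⁻¹ * A)) r (mact (matS Atil⁻¹) x)| ≤ C * h ^ 2 := by
  intro r hr hbd Atil A x h hpos hle
  set U : orthogonalGroup (Fin 2) ℝ := ((Atil⁻¹ : S) : orthogonalGroup (Fin 2) ℝ)
  have hrU : ContDiff ℝ ((d + 2 : ℕ) : ℕ∞) (r ∘ mact (U : Matrix (Fin 2) (Fin 2) ℝ)) :=
    hr.comp (LinearMap.toContinuousLinearMap (mact (U : Matrix (Fin 2) (Fin 2) ℝ))).contDiff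
  have hrU_bound : ∀ z, ∀ j ≤ d + 2,
      ‖iteratedFDeriv ℝ j (r ∘ mact (U : Matrix (Fin 2) (Fin 2) ℝ)) z‖ ≤ M := fun z j hj =>
    (norm_iteratedFDeriv_comp_mact U r j z).trans_le (hbd _ j hj)
  have happrox := hcons _ hrU hrU_bound A x h hpos hle
  rwa [chi_comp_mact β _ _ (hr.of_le (by exact_mod_cast by omega))] at happrox

/-- Theorem 2, equation (appro): quadratic-order equivariance error of
the discretized first layer.  Assume the stencils `c^A_p(h)` (supported on the finite
set `P ⊂ ℤ²`) approximate the operators `χ^{(A)}` with error `≤ C·h²` uniformly over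
functions whose derivatives of order `≤ d+2` are bounded by `M` and over `h ∈ (0, h₀]`.
Then for any such `r` and any `Ã, A ∈ S`, applying the discretized operator to
`π_Ã[r]` agrees with `χ^{(Ã⁻¹A)}[r](Ã⁻¹x) = π^E_Ã[Ψ[r]](x, A)` up to `C·h²`. -/
theorem discretized_Psi_equivariance_error {d : ℕ}
    (S : Subgroup ↥(Matrix.orthogonalGroup (Fin 2) ℝ)) (hS : (S : Set ↥(Matrix.orthogonalGroup (Fin 2) ℝ)).Finite)
    (β : (Fin 2 → Fin (d+1)) → ℝ) (M C h₀ : ℝ) (hM : 0 < M) (hC : 0 < C)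
    (hh₀ : 0 < h₀) (P : Finset (ℤ × ℤ)) (c : S → ℤ × ℤ → ℝ → ℝ)
    (hcons : ∀ g : EuclideanSpace ℝ (Fin 2) → ℝ, ContDiff ℝ ((d + 2 : ℕ) : ℕ∞) g →
      (∀ z, ∀ j ≤ d + 2, ‖iteratedFDeriv ℝ j g z‖ ≤ M) →
      ∀ A : S, ∀ x : EuclideanSpace ℝ (Fin 2), ∀ h : ℝ, 0 < h → h ≤ h₀ →
        |(∑ p ∈ P, c A p h * g (x + h • gridpt p)) - chi β (matS A) g x| ≤ C * h ^ 2) :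
    ∀ r : EuclideanSpace ℝ (Fin 2) → ℝ, ContDiff ℝ ((d + 2 : ℕ) : ℕ∞) r →
      (∀ z, ∀ j ≤ d + 2, ‖iteratedFDeriv ℝ j r z‖ ≤ M) →
      ∀ Atil A : S, ∀ x : EuclideanSpace ℝ (Fin 2), ∀ h : ℝ, 0 < h → h ≤ h₀ →
        |(∑ p ∈ P, c A p h * r (mact (matS Atil⁻¹) (x + h • gridpt p)))
            - chi β (matS (Atil⁻¹ * A)) r (mact (matS Atil⁻¹) x)| ≤ C * h ^ 2 :=
  discretized_Psi_equivariance_error_general S β M C h₀ P c hcons
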